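/- For each non-negative integer N: pG(4,1,1;2N) = rtp(3,3,1;N); pG(4,1,1;4N+1) = 2·rtp(3,3,2;N) + 4·Tg(3,6,1;N−1); and pG(4,1,1;4N+3) = 0. -/
import Mathlib


/-- The `n`-th triangular number `n(n+1)/2`. -/
def tri (n : ℕ) : ℕ := n * (n + 1) / 2

/-- The `n`-th generalized pentagonal number `n(3n+1)/2` (`n ∈ ℤ`). -/
def pent (n : ℤ) : ℤ := n * (3 * n + 1) / 2

/-- The `n`-th generalized octagonal number `n(3n+2)` (`n ∈ ℤ`). -/
def oct (n : ℤ) : ℤ := n * (3 * n + 2)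
noncomputable def rCount (a b c : ℕ) (N : ℤ) : ℕ :=
  {x : ℤ × ℤ × ℤ | N = a * x.1 ^ 2 + b * x.2.1 ^ 2 + c * x.2.2 ^ 2}.ncard

noncomputable def TCount (a b c : ℕ) (N : ℤ) : ℕ :=
  {x : ℕ × ℕ × ℕ | N = a * tri x.1 + b * tri x.2.1 + c * tri x.2.2}.ncard

noncomputable def rTCount (a b c : ℕ) (N : ℤ) : ℕ :=
  {x : ℤ × ℕ × ℕ | N = a * x.1 ^ 2 + b * tri x.2.1 + c * tri x.2.2}.ncard

noncomputable def RtCount (a b c : ℕ) (N : ℤ) : ℕ :=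
  {x : ℤ × ℤ × ℕ | N = a * x.1 ^ 2 + b * x.2.1 ^ 2 + c * tri x.2.2}.ncard

noncomputable def GCount (a b c : ℕ) (N : ℤ) : ℕ :=
  {x : ℤ × ℤ × ℤ | N = a * oct x.1 + b * oct x.2.1 + c * oct x.2.2}.ncard

noncomputable def RgCount (a b c : ℕ) (N : ℤ) : ℕ :=
  {x : ℤ × ℤ × ℤ | N = a * x.1 ^ 2 + b * x.2.1 ^ 2 + c * oct x.2.2}.ncard

noncomputable def RpCount (a b c : ℕ) (N : ℤ) : ℕ :=
  {x : ℤ × ℤ × ℤ | N = a * x.1 ^ 2 + b * x.2.1 ^ 2 + c * pent x.2.2}.ncard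

noncomputable def rPCount (a b c : ℕ) (N : ℤ) : ℕ :=
  {x : ℤ × ℤ × ℤ | N = a * x.1 ^ 2 + b * pent x.2.1 + c * pent x.2.2}.ncard

noncomputable def rGCount (a b c : ℕ) (N : ℤ) : ℕ :=
  {x : ℤ × ℤ × ℤ | N = a * x.1 ^ 2 + b * oct x.2.1 + c * oct x.2.2}.ncard

noncomputable def pGCount (a b c : ℕ) (N : ℤ) : ℕ :=
  {x : ℤ × ℤ × ℤ | N = a * pent x.1 + b * oct x.2.1 + c * oct x.2.2}.ncard

noncomputable def TpCount (a b c : ℕ) (N : ℤ) : ℕ :=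
  {x : ℕ × ℕ × ℤ | N = a * tri x.1 + b * tri x.2.1 + c * pent x.2.2}.ncard

noncomputable def TgCount (a b c : ℕ) (N : ℤ) : ℕ :=
  {x : ℕ × ℕ × ℤ | N = a * tri x.1 + b * tri x.2.1 + c * oct x.2.2}.ncard

noncomputable def tGCount (a b c : ℕ) (N : ℤ) : ℕ :=
  {x : ℕ × ℤ × ℤ | N = a * tri x.1 + b * oct x.2.1 + c * oct x.2.2}.ncard

noncomputable def rtpCount (a b c : ℕ) (N : ℤ) : ℕ :=
  {x : ℤ × ℕ × ℤ | N = a * x.1 ^ 2 + b * tri x.2.1 + c * pent x.2.2}.ncard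

noncomputable def rtgCount (a b c : ℕ) (N : ℤ) : ℕ :=
  {x : ℤ × ℕ × ℤ | N = a * x.1 ^ 2 + b * tri x.2.1 + c * oct x.2.2}.ncard

noncomputable def tpgCount (a b c : ℕ) (N : ℤ) : ℕ :=
  {x : ℕ × ℤ × ℤ | N = a * tri x.1 + b * pent x.2.1 + c * oct x.2.2}.ncard


-- Auxiliary lemmas
lemma tri_two (n : ℕ) : 2 * tri n = n * (n + 1) :=
  Nat.mul_div_cancel' (even_iff_two_dvd.mp (Nat.even_mul_succ_self n))

lemma tri_cast (n : ℕ) : (2 : ℤ) * (tri n : ℤ) = (n : ℤ) * ((n : ℤ) + 1) := by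
  have h := tri_two n
  have h2 : ((2 * tri n : ℕ) : ℤ) = ((n * (n+1) : ℕ) : ℤ) := by rw [h]
  push_cast at h2; linarith

lemma pent_two (k : ℤ) : 2 * pent k = k * (3 * k + 1) := by
  have h : (2:ℤ) ∣ k * (3 * k + 1) := by
    rcases Int.even_or_odd k with ⟨j, hj⟩ | ⟨j, hj⟩
    · exact ⟨j * (3*k+1), by rw [hj]; ring⟩
    · exact ⟨k * (3*j+2), by rw [hj]; ring⟩
  exact Int.mul_ediv_cancel' h

lemma oct_def (k : ℤ) : oct k = k * (3 * k + 2) := rfl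

lemma oct_dec (m : ℤ) : ∃ K, oct m = 4 * K + m % 2 := by
  obtain ⟨k, hk⟩ : ∃ k, m = 2*k ∨ m = 2*k+1 := ⟨m/2, by omega⟩
  rcases hk with hk | hk
  · refine ⟨3*k*k + k, ?_⟩
    subst hk; rw [oct_def]
    have h2 : (2*k) % 2 = 0 := by omega
    rw [h2]; ring
  · refine ⟨3*k*k + 4*k + 1, ?_⟩
    subst hk; rw [oct_def]
    have h2 : (2*k+1) % 2 = 1 := by omega
    rw [h2]; ring

def fold (b : ℤ) : ℕ := if 0 ≤ b then b.toNat else (-b-1).toNat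

lemma fold_cases (b : ℤ) : ((fold b : ℤ) = b ∧ 0 ≤ b) ∨ ((fold b : ℤ) = -b-1 ∧ b < 0) := by
  unfold fold; split <;> [left; right] <;> constructor <;> omega

lemma tri_fold (b : ℤ) : (2 : ℤ) * (tri (fold b) : ℤ) = b * (b + 1) := by
  have hc := tri_cast (fold b)
  rcases fold_cases b with ⟨h, _⟩ | ⟨h, _⟩ <;> rw [h] at hc <;> linarith [hc]

lemma ncard_bijOn {α β : Type*} {f : α → β} {s : Set α} {t : Set β} (h : Set.BijOn f s t) :
    s.ncard = t.ncard := by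
  rw [← h.image_eq]; exact (Set.ncard_image_of_injOn h.injOn).symm

lemma pent_nonneg (k : ℤ) : 0 ≤ pent k := by
  have h := pent_two k
  rcases le_or_gt 0 k with hk | hk
  · nlinarith
  · nlinarith [mul_nonneg (by linarith : (0:ℤ) ≤ -k) (by linarith : (0:ℤ) ≤ -(3*k+1))]

lemma pent_bound (k : ℤ) : k ≤ pent k + 1 ∧ -k ≤ pent k + 1 := by
  have h := pent_two k
  constructor <;> nlinarith [sq_nonneg (k-1), sq_nonneg (k+1), sq_nonneg k]

lemma oct_nonneg (k : ℤ) : 0 ≤ oct k := by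
  rw [oct_def]
  rcases le_or_gt 0 k with hk | hk
  · nlinarith
  · nlinarith [mul_nonneg (by linarith : (0:ℤ) ≤ -k) (by linarith : (0:ℤ) ≤ -(3*k+2))]

lemma oct_bound (k : ℤ) : k ≤ oct k + 1 ∧ -k ≤ oct k + 1 := by
  rw [oct_def]
  constructor <;> nlinarith [sq_nonneg (k-1), sq_nonneg (k+1), sq_nonneg k]

lemma sq_bound (k : ℤ) : k ≤ k^2 + 1 ∧ -k ≤ k^2 + 1 := by
  constructor <;> nlinarith [sq_nonneg (k-1), sq_nonneg (k+1)]

lemma tri_ge (b : ℕ) : b ≤ 2 * tri b := by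
  have := tri_two b; nlinarith

lemma set_split {α : Type*} (s : Set α) (p : α → Prop) :
    s = (s ∩ {x | p x}) ∪ (s ∩ {x | ¬ p x}) := by
  ext x; by_cases h : p x <;> simp [h]

lemma succ_mul_facts (a : ℤ) : 0 ≤ a * (a + 1) ∧ a ≤ a * (a + 1) + 1 ∧ -a ≤ a * (a + 1) + 1 := by
  rcases le_or_gt 0 a with h | h
  · refine ⟨by nlinarith, by nlinarith, by nlinarith⟩
  · refine ⟨by nlinarith, by nlinarith, by nlinarith [sq_nonneg (a+1)]⟩

lemma parity_opp (N' l m n : ℤ) (hx : 4 * N' + 1 = 4 * pent l + oct m + oct n) :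
    m % 2 + n % 2 = 1 := by
  obtain ⟨K1, hK1⟩ := oct_dec m
  obtain ⟨K2, hK2⟩ := oct_dec n
  obtain ⟨P, hP⟩ : ∃ P, pent l = P := ⟨_, rfl⟩
  rw [hP, hK1, hK2] at hx
  omega

lemma disj_split {γ : Type*} (s : Set γ) (p : γ → Prop) :
    Disjoint (s ∩ {x | p x}) (s ∩ {x | ¬ p x}) :=
  Set.disjoint_left.mpr (by rintro x ⟨_, hp⟩ ⟨_, hnp⟩; exact hnp hp)

lemma ncard_split {γ : Type*} (s : Set γ) (p : γ → Prop) (hs : s.Finite) :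
    s.ncard = (s ∩ {x | p x}).ncard + (s ∩ {x | ¬ p x}).ncard := by
  conv_lhs => rw [set_split s p]
  exact Set.ncard_union_eq (disj_split s p) (hs.inter_of_left _) (hs.inter_of_left _)

lemma part2aux (N : ℕ) :
    {x : ℤ × ℤ × ℤ | 4 * (N:ℤ) + 1 = 4 * pent x.1 + oct x.2.1 + oct x.2.2}.ncard
    = 2 * {x : ℤ × ℕ × ℤ | (N:ℤ) = 3 * x.1 ^ 2 + 3 * (tri x.2.1 : ℤ) + 2 * pent x.2.2}.ncard
    + 4 * {x : ℕ × ℕ × ℤ | (N:ℤ) - 1 = 3 * (tri x.1 : ℤ) + 6 * (tri x.2.1 : ℤ) + oct x.2.2}.ncard := by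
  set P : Set (ℤ × ℤ × ℤ) :=
    {x | 4 * (N:ℤ) + 1 = 4 * pent x.1 + oct x.2.1 + oct x.2.2} with hPdef
  set B2 : Set (ℤ × ℕ × ℤ) :=
    {x | (N:ℤ) = 3 * x.1 ^ 2 + 3 * (tri x.2.1 : ℤ) + 2 * pent x.2.2} with hB2def
  set S2 : Set (ℕ × ℕ × ℤ) :=
    {x | (N:ℤ) - 1 = 3 * (tri x.1 : ℤ) + 6 * (tri x.2.1 : ℤ) + oct x.2.2} with hS2def
  set X : Set (ℤ × ℤ × ℤ) :=
    {x | (N:ℤ) = pent x.1 + x.2.1 * (3 * x.2.1 + 1) + oct x.2.2} with hXdef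
  set W : Set (ℤ × ℕ × ℤ) :=
    {x | 2 * ((N:ℤ) - 1) = 3 * (x.1 * (x.1 + 1)) + 12 * (tri x.2.1 : ℤ) + 2 * oct x.2.2} with hWdef
  -- Finiteness
  have hPfin : P.Finite := by
    apply Set.Finite.subset (Set.Finite.prod (Set.finite_Icc (-(4*(N:ℤ)+2)) (4*(N:ℤ)+2))
      (Set.Finite.prod (Set.finite_Icc (-(4*(N:ℤ)+2)) (4*(N:ℤ)+2))
        (Set.finite_Icc (-(4*(N:ℤ)+2)) (4*(N:ℤ)+2))))
    rintro ⟨l, m, n⟩ hx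
    simp only [hPdef, Set.mem_setOf_eq] at hx
    simp only [Set.mem_prod, Set.mem_Icc]
    have h1 := pent_nonneg l; have h2 := oct_nonneg m; have h3 := oct_nonneg n
    have b1 := pent_bound l; have b2 := oct_bound m; have b3 := oct_bound n
    refine ⟨⟨?_, ?_⟩, ⟨?_, ?_⟩, ⟨?_, ?_⟩⟩ <;> linarith [b1.1, b1.2, b2.1, b2.2, b3.1, b3.2]
  have hXfin : X.Finite := by
    apply Set.Finite.subset (Set.Finite.prod (Set.finite_Icc (-(4*(N:ℤ)+2)) (4*(N:ℤ)+2))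
      (Set.Finite.prod (Set.finite_Icc (-(4*(N:ℤ)+2)) (4*(N:ℤ)+2))
        (Set.finite_Icc (-(4*(N:ℤ)+2)) (4*(N:ℤ)+2))))
    rintro ⟨l, u, w⟩ hx
    simp only [hXdef, Set.mem_setOf_eq] at hx
    simp only [Set.mem_prod, Set.mem_Icc]
    have h1 := pent_nonneg l; have h2 := pent_nonneg u; have h3 := oct_nonneg w
    have b1 := pent_bound l; have b2 := pent_bound u; have b3 := oct_bound w
    have h2u := pent_two u
    refine ⟨⟨?_, ?_⟩, ⟨?_, ?_⟩, ⟨?_, ?_⟩⟩ <;>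
      linarith [b1.1, b1.2, b2.1, b2.2, b3.1, b3.2]
  have hWfin : W.Finite := by
    apply Set.Finite.subset (Set.Finite.prod (Set.finite_Icc (-(2*(N:ℤ)+2)) (2*(N:ℤ)+2))
      (Set.Finite.prod (Set.finite_Iic (2*N)) (Set.finite_Icc (-(2*(N:ℤ)+2)) (2*(N:ℤ)+2))))
    rintro ⟨a, b, c⟩ hx
    simp only [hWdef, Set.mem_setOf_eq] at hx
    simp only [Set.mem_prod, Set.mem_Icc, Set.mem_Iic]
    have h1 := succ_mul_facts a
    have h2 : (0:ℤ) ≤ (tri b : ℤ) := Int.natCast_nonneg _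
    have h3 := oct_nonneg c
    have b3 := oct_bound c
    have hb : (b:ℤ) ≤ 2 * (tri b : ℤ) := by exact_mod_cast tri_ge b
    refine ⟨⟨?_, ?_⟩, ?_, ⟨?_, ?_⟩⟩
    · linarith [h1.1, h1.2, h1.2.1]
    · linarith [h1.2.1, h1.2.2]
    · have : (b:ℤ) ≤ 2*(N:ℤ) := by linarith [h1.1]
      exact_mod_cast this
    · linarith [b3.2]
    · linarith [b3.1]
  -- swap bijection
  have hswap : (P ∩ {x | ¬ x.2.1 % 2 = 0}).ncard = (P ∩ {x | x.2.1 % 2 = 0}).ncard := by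
    apply ncard_bijOn (f := fun x : ℤ × ℤ × ℤ => (x.1, x.2.2, x.2.1))
    refine ⟨?_, ?_, ?_⟩
    · rintro ⟨l, m, n⟩ ⟨hx, hm⟩
      simp only [hPdef, Set.mem_setOf_eq] at hx
      simp only [Set.mem_setOf_eq] at hm
      have hp := parity_opp N l m n hx
      refine ⟨by simp only [hPdef, Set.mem_setOf_eq]; linarith,
        by simp only [Set.mem_setOf_eq]; omega⟩
    · rintro ⟨l, m, n⟩ _ ⟨l', m', n'⟩ _ h
      simp only [Prod.mk.injEq] at h ⊢
      tauto
    · rintro ⟨l, m, n⟩ ⟨hx, hm⟩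
      simp only [hPdef, Set.mem_setOf_eq] at hx
      simp only [Set.mem_setOf_eq] at hm
      have hp := parity_opp N l m n hx
      refine ⟨(l, n, m), ⟨by simp only [hPdef, Set.mem_setOf_eq]; linarith,
        by simp only [Set.mem_setOf_eq]; omega⟩, rfl⟩
  -- Pe -> X
  have hPeX : (P ∩ {x | x.2.1 % 2 = 0}).ncard = X.ncard := by
    apply ncard_bijOn (f := fun x : ℤ × ℤ × ℤ => (x.1, x.2.1/2, (-(x.2.2+1))/2))
    refine ⟨?_, ?_, ?_⟩
    · rintro ⟨l, m, n⟩ ⟨hx, hm⟩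
      simp only [hPdef, Set.mem_setOf_eq] at hx
      simp only [Set.mem_setOf_eq] at hm
      have hp := parity_opp N l m n hx
      obtain ⟨u, hu⟩ : ∃ u, m = 2*u := ⟨m/2, by omega⟩
      obtain ⟨w, hw⟩ : ∃ w, n = -2*w-1 := ⟨(-(n+1))/2, by omega⟩
      subst hu hw
      simp only [hXdef, Set.mem_setOf_eq]
      rw [show (2*u)/2 = u from by omega, show (-((-2*w-1)+1))/2 = w from by omega]
      have key : 4*(N:ℤ) = 4*pent l + 4*(u*(3*u+1)) + 4*oct w := by
        linear_combination hx + oct_def (2*u) + oct_def (-2*w-1) - 4*oct_def w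
      linarith
    · rintro ⟨l, m, n⟩ ⟨hx, hm⟩ ⟨l', m', n'⟩ ⟨hx', hm'⟩ h
      simp only [hPdef, Set.mem_setOf_eq] at hx hx'
      simp only [Set.mem_setOf_eq] at hm hm'
      have hp := parity_opp N l m n hx
      have hp' := parity_opp N l' m' n' hx'
      simp only [Prod.mk.injEq] at h ⊢
      obtain ⟨h1, h2, h3⟩ := h
      refine ⟨h1, by omega, by omega⟩
    · rintro ⟨l, u, w⟩ hy
      simp only [hXdef, Set.mem_setOf_eq] at hy
      refine ⟨(l, 2*u, -2*w-1), ⟨?_, ?_⟩, ?_⟩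
      · simp only [hPdef, Set.mem_setOf_eq]
        linear_combination 4*hy + 4*oct_def w - oct_def (2*u) - oct_def (-2*w-1)
      · simp only [Set.mem_setOf_eq]; omega
      · refine Prod.ext ?_ (Prod.ext ?_ ?_) <;> simp only [] <;> omega
  -- X1 -> B2
  have hX1 : (X ∩ {x | (x.1 + x.2.1 + x.2.2) % 2 = 0}).ncard = B2.ncard := by
    apply ncard_bijOn (f := fun x : ℤ × ℤ × ℤ =>
      ((x.2.2 - x.1 - x.2.1)/2, fold (x.2.1 + x.2.2), (x.1 + x.2.2 - x.2.1)/2))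
    refine ⟨?_, ?_, ?_⟩
    · rintro ⟨l, u, w⟩ ⟨hx, hpar⟩
      simp only [hXdef, Set.mem_setOf_eq] at hx
      simp only [Set.mem_setOf_eq] at hpar
      obtain ⟨a0, ha⟩ : ∃ a0, w - l - u = 2*a0 := ⟨(w-l-u)/2, by omega⟩
      obtain ⟨c0, hc⟩ : ∃ c0, l + w - u = 2*c0 := ⟨(l+w-u)/2, by omega⟩
      simp only [hB2def, Set.mem_setOf_eq]
      rw [show (w - l - u)/2 = a0 from by omega, show (l + w - u)/2 = c0 from by omega]
      have e1 : l = c0 - a0 := by omega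
      subst e1
      have e2 : w = u + a0 + c0 := by omega
      subst e2
      have key : 2*(N:ℤ) = 6*a0^2 + 6*(tri (fold (u + (u + a0 + c0))) : ℤ) + 4*pent c0 := by
        linear_combination 2*hx + pent_two (c0 - a0) + 2*oct_def (u + a0 + c0)
          - 3*tri_fold (u + (u + a0 + c0)) - 2*pent_two c0
      linarith
    · rintro ⟨l, u, w⟩ ⟨hx, hpar⟩ ⟨l', u', w'⟩ ⟨hx', hpar'⟩ h
      simp only [Set.mem_setOf_eq] at hpar hpar'
      simp only [Prod.mk.injEq] at h ⊢
      obtain ⟨h1, h2, h3⟩ := h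
      have h2' : ((fold (u + w) : ℕ) : ℤ) = ((fold (u' + w') : ℕ) : ℤ) := by
        exact_mod_cast congrArg (Nat.cast : ℕ → ℤ) h2
      rcases fold_cases (u + w) with ⟨e1, e2⟩ | ⟨e1, e2⟩ <;>
        rcases fold_cases (u' + w') with ⟨f1, f2⟩ | ⟨f1, f2⟩ <;>
        rw [e1, f1] at h2' <;> refine ⟨by omega, by omega, by omega⟩
    · rintro ⟨a, b, c⟩ hy
      simp only [hB2def, Set.mem_setOf_eq] at hy
      obtain ⟨b', hb1, hb2, hb3⟩ : ∃ b' : ℤ, fold b' = b ∧ (b' - (a + c)) % 2 = 0 ∧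
          b' * (b' + 1) = (b:ℤ) * ((b:ℤ) + 1) := by
        by_cases hp : ((b:ℤ) + a + c) % 2 = 0
        · exact ⟨(b:ℤ), by unfold fold; split <;> omega, by omega, by ring⟩
        · exact ⟨-(b:ℤ) - 1, by unfold fold; split <;> omega, by omega, by ring⟩
      obtain ⟨u0, hu⟩ : ∃ u0, b' - a - c = 2*u0 := ⟨(b'-a-c)/2, by omega⟩
      obtain ⟨w0, hw⟩ : ∃ w0, b' = u0 + w0 := ⟨b' - u0, by ring⟩
      subst hw
      have e3 : c = w0 - u0 - a := by omega
      subst e3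
      refine ⟨(w0 - u0 - a - a, u0, w0), ⟨?_, ?_⟩, ?_⟩
      · simp only [hXdef, Set.mem_setOf_eq]
        have key : 2*(N:ℤ) = 2*pent (w0 - u0 - a - a) + 2*(u0*(3*u0+1)) + 2*oct w0 := by
          linear_combination 2*hy + 3*tri_cast b - 3*hb3 + 2*pent_two (w0 - u0 - a)
            - pent_two (w0 - u0 - a - a) - 2*oct_def w0
        linarith
      · simp only [Set.mem_setOf_eq]; omega
      · refine Prod.ext ?_ (Prod.ext ?_ ?_)
        · simp only []; omega
        · exact hb1
        · simp only []; omega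
  -- X2 -> W
  have hX2 : (X ∩ {x | ¬ (x.1 + x.2.1 + x.2.2) % 2 = 0}).ncard = W.ncard := by
    apply ncard_bijOn (f := fun x : ℤ × ℤ × ℤ =>
      (-x.2.1 - x.2.2 - 1, fold ((x.2.2 - x.1 - x.2.1 - 1)/2), (x.2.1 - x.1 - x.2.2 - 1)/2))
    refine ⟨?_, ?_, ?_⟩
    · rintro ⟨l, u, w⟩ ⟨hx, hpar⟩
      simp only [hXdef, Set.mem_setOf_eq] at hx
      simp only [Set.mem_setOf_eq] at hpar
      obtain ⟨e0, ha⟩ : ∃ e0, w - l - u - 1 = 2*e0 := ⟨(w-l-u-1)/2, by omega⟩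
      obtain ⟨c0, hc⟩ : ∃ c0, u - l - w - 1 = 2*c0 := ⟨(u-l-w-1)/2, by omega⟩
      simp only [hWdef, Set.mem_setOf_eq]
      rw [show (w - l - u - 1)/2 = e0 from by omega, show (u - l - w - 1)/2 = c0 from by omega]
      have e1 : l = -e0 - c0 - 1 := by omega
      subst e1
      have e2 : w = u + e0 - c0 := by omega
      subst e2
      linear_combination 2*hx + pent_two (-e0 - c0 - 1) + 2*oct_def (u + e0 - c0)
        - 6*tri_fold e0 - 2*oct_def c0
    · rintro ⟨l, u, w⟩ ⟨hx, hpar⟩ ⟨l', u', w'⟩ ⟨hx', hpar'⟩ h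
      simp only [Set.mem_setOf_eq] at hpar hpar'
      simp only [Prod.mk.injEq] at h ⊢
      obtain ⟨h1, h2, h3⟩ := h
      have h2' : ((fold ((w - l - u - 1)/2) : ℕ) : ℤ) = ((fold ((w' - l' - u' - 1)/2) : ℕ) : ℤ) := by
        exact_mod_cast congrArg (Nat.cast : ℕ → ℤ) h2
      rcases fold_cases ((w - l - u - 1)/2) with ⟨e1, e2⟩ | ⟨e1, e2⟩ <;>
        rcases fold_cases ((w' - l' - u' - 1)/2) with ⟨f1, f2⟩ | ⟨f1, f2⟩ <;>
        rw [e1, f1] at h2' <;> refine ⟨by omega, by omega, by omega⟩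
    · rintro ⟨a, b, c⟩ hy
      simp only [hWdef, Set.mem_setOf_eq] at hy
      obtain ⟨b', hb1, hb2, hb3⟩ : ∃ b' : ℤ, fold b' = b ∧ (b' - (c - a - 1)) % 2 = 0 ∧
          b' * (b' + 1) = (b:ℤ) * ((b:ℤ) + 1) := by
        by_cases hp : ((b:ℤ) - (c - a - 1)) % 2 = 0
        · exact ⟨(b:ℤ), by unfold fold; split <;> omega, by omega, by ring⟩
        · exact ⟨-(b:ℤ) - 1, by unfold fold; split <;> omega, by omega, by ring⟩
      obtain ⟨u0, hu⟩ : ∃ u0, -a - 1 - b' + c = 2*u0 := ⟨(-a-1-b'+c)/2, by omega⟩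
      have e3 : c = 2*u0 + a + 1 + b' := by omega
      subst e3
      refine ⟨(-b' - (2*u0 + a + 1 + b') - 1, u0, -a - 1 - u0), ⟨?_, ?_⟩, ?_⟩
      · simp only [hXdef, Set.mem_setOf_eq]
        have key : 2*(N:ℤ) = 2*pent (-b' - (2*u0 + a + 1 + b') - 1) + 2*(u0*(3*u0+1))
            + 2*oct (-a - 1 - u0) := by
          linear_combination hy + 6*tri_cast b - 6*hb3 - pent_two (-b' - (2*u0 + a + 1 + b') - 1)
            + 2*oct_def (2*u0 + a + 1 + b') - 2*oct_def (-a - 1 - u0)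
        linarith
      · simp only [Set.mem_setOf_eq]; omega
      · refine Prod.ext ?_ (Prod.ext ?_ ?_)
        · simp only []; omega
        · show fold (((-a - 1 - u0) - (-b' - (2*u0 + a + 1 + b') - 1) - u0 - 1)/2) = b
          rw [show ((-a - 1 - u0) - (-b' - (2*u0 + a + 1 + b') - 1) - u0 - 1)/2 = b' from by omega]
          exact hb1
        · simp only []; omega
  -- W+ -> S2
  have hW1 : (W ∩ {x | 0 ≤ x.1}).ncard = S2.ncard := by
    apply ncard_bijOn (f := fun x : ℤ × ℕ × ℤ => (x.1.toNat, x.2.1, x.2.2))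
    refine ⟨?_, ?_, ?_⟩
    · rintro ⟨a, b, c⟩ ⟨hy, ha⟩
      simp only [hWdef, Set.mem_setOf_eq] at hy
      simp only [Set.mem_setOf_eq] at ha
      simp only [hS2def, Set.mem_setOf_eq]
      have hc := tri_cast a.toNat
      rw [Int.toNat_of_nonneg ha] at hc
      linarith
    · rintro ⟨a, b, c⟩ ⟨_, ha⟩ ⟨a', b', c'⟩ ⟨_, ha'⟩ h
      simp only [Set.mem_setOf_eq] at ha ha'
      simp only [Prod.mk.injEq] at h ⊢
      obtain ⟨h1, h2, h3⟩ := h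
      exact ⟨by omega, h2, h3⟩
    · rintro ⟨A, B, c⟩ hz
      simp only [hS2def, Set.mem_setOf_eq] at hz
      refine ⟨((A:ℤ), B, c), ⟨?_, ?_⟩, ?_⟩
      · simp only [hWdef, Set.mem_setOf_eq]
        have hc := tri_cast A
        linarith
      · simp only [Set.mem_setOf_eq]; positivity
      · refine Prod.ext ?_ rfl
        simp only []; omega
  -- W- -> S2
  have hW2 : (W ∩ {x | ¬ 0 ≤ x.1}).ncard = S2.ncard := by
    apply ncard_bijOn (f := fun x : ℤ × ℕ × ℤ => ((-x.1-1).toNat, x.2.1, x.2.2))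
    refine ⟨?_, ?_, ?_⟩
    · rintro ⟨a, b, c⟩ ⟨hy, ha⟩
      simp only [hWdef, Set.mem_setOf_eq] at hy
      simp only [Set.mem_setOf_eq] at ha
      simp only [hS2def, Set.mem_setOf_eq]
      have hc := tri_cast (-a-1).toNat
      rw [show (((-a-1).toNat : ℕ) : ℤ) = -a-1 from by omega] at hc
      linarith
    · rintro ⟨a, b, c⟩ ⟨_, ha⟩ ⟨a', b', c'⟩ ⟨_, ha'⟩ h
      simp only [Set.mem_setOf_eq] at ha ha'
      simp only [Prod.mk.injEq] at h ⊢
      obtain ⟨h1, h2, h3⟩ := h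
      exact ⟨by omega, h2, h3⟩
    · rintro ⟨A, B, c⟩ hz
      simp only [hS2def, Set.mem_setOf_eq] at hz
      refine ⟨(-(A:ℤ)-1, B, c), ⟨?_, ?_⟩, ?_⟩
      · simp only [hWdef, Set.mem_setOf_eq]
        have hc := tri_cast A
        linarith
      · simp only [Set.mem_setOf_eq]; omega
      · refine Prod.ext ?_ rfl
        simp only []; omega
  -- assemble
  have split1 := ncard_split P (fun x => x.2.1 % 2 = 0) hPfin
  have split2 := ncard_split X (fun x => (x.1 + x.2.1 + x.2.2) % 2 = 0) hXfin
  have split3 := ncard_split W (fun x => 0 ≤ x.1) hWfin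
  rw [split1, hswap, hPeX, split2, hX1, hX2, split3, hW1, hW2]
  ring


theorem stmt7 (N : ℕ) :
    pGCount 4 1 1 (2 * N : ℤ) = rtpCount 3 3 1 (N : ℤ) ∧
    pGCount 4 1 1 (4 * N + 1 : ℤ) =
      2 * rtpCount 3 3 2 (N : ℤ) + 4 * TgCount 3 6 1 ((N : ℤ) - 1) ∧
    pGCount 4 1 1 (4 * N + 3 : ℤ) = 0 := by
  refine ⟨?_, ?_, ?_⟩
  · -- Part 1
    unfold pGCount rtpCount
    apply ncard_bijOn (f := fun x : ℤ × ℤ × ℤ =>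
      (((x.2.1 - x.2.2)/2 : ℤ), fold (x.1 + (x.2.1 + x.2.2)/2), ((x.2.1 + x.2.2)/2 - x.1 : ℤ)))
    refine ⟨?_, ?_, ?_⟩
    · -- MapsTo
      rintro ⟨l, m, n⟩ hx
      simp only [Set.mem_setOf_eq] at hx ⊢
      push_cast at hx ⊢
      have hpar : (m + n) % 2 = 0 := by
        have hx' := hx
        obtain ⟨K1, hK1⟩ := oct_dec m
        obtain ⟨K2, hK2⟩ := oct_dec n
        obtain ⟨P, hP⟩ : ∃ P, pent l = P := ⟨_, rfl⟩
        rw [hP, hK1, hK2] at hx'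
        omega
      obtain ⟨s, hs⟩ : ∃ s, m + n = 2 * s := ⟨(m+n)/2, by omega⟩
      obtain ⟨d, hd⟩ : ∃ d, m - n = 2 * d := ⟨(m-n)/2, by omega⟩
      have hm : m = s + d := by omega
      have hn : n = s - d := by omega
      subst hm hn
      rw [show (s + d - (s - d))/2 = d from by omega,
          show (s + d + (s - d))/2 = s from by omega]
      have key : 2 * ((N : ℤ)) = 6 * d^2 + 6 * (tri (fold (l + s)) : ℤ) + 2 * pent (s - l) := by
        linear_combination hx + 2 * pent_two l + oct_def (s + d) + oct_def (s - d)
          - 3 * tri_fold (l + s) - pent_two (s - l)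
      linarith
    · -- InjOn
      rintro ⟨l, m, n⟩ hx ⟨l', m', n'⟩ hy hxy
      simp only [Set.mem_setOf_eq] at hx hy
      simp only [Prod.mk.injEq] at hxy
      obtain ⟨h1, h2, h3⟩ := hxy
      have hpar : (m + n) % 2 = 0 := by
        obtain ⟨K1, hK1⟩ := oct_dec m
        obtain ⟨K2, hK2⟩ := oct_dec n
        obtain ⟨P, hP⟩ : ∃ P, pent l = P := ⟨_, rfl⟩
        rw [hP, hK1, hK2] at hx
        omega
      have hpar' : (m' + n') % 2 = 0 := by
        obtain ⟨K1, hK1⟩ := oct_dec m'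
        obtain ⟨K2, hK2⟩ := oct_dec n'
        obtain ⟨P, hP⟩ : ∃ P, pent l' = P := ⟨_, rfl⟩
        rw [hP, hK1, hK2] at hy
        omega
      have h2' : ((fold (l + (m + n)/2) : ℕ) : ℤ) = ((fold (l' + (m' + n')/2) : ℕ) : ℤ) := by
        exact_mod_cast congrArg (Nat.cast : ℕ → ℤ) h2
      rcases fold_cases (l + (m + n)/2) with ⟨e1, e2⟩ | ⟨e1, e2⟩ <;>
        rcases fold_cases (l' + (m' + n')/2) with ⟨f1, f2⟩ | ⟨f1, f2⟩ <;>
        rw [e1, f1] at h2' <;>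
        (refine Prod.ext ?_ (Prod.ext ?_ ?_) <;> simp only [] <;> omega)
    · -- SurjOn
      rintro ⟨a, b, c⟩ hy
      simp only [Set.mem_setOf_eq] at hy
      push_cast at hy
      obtain ⟨b', hb1, hb2, hb3⟩ : ∃ b' : ℤ, fold b' = b ∧ (b' - c) % 2 = 0 ∧
          b' * (b' + 1) = (b : ℤ) * ((b : ℤ) + 1) := by
        by_cases hp : (((b : ℤ)) + c) % 2 = 0
        · exact ⟨(b : ℤ), by unfold fold; split <;> omega, by omega, by ring⟩
        · exact ⟨-(b : ℤ) - 1, by unfold fold; split <;> omega, by omega, by ring⟩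
      obtain ⟨L, hL⟩ : ∃ L, b' - c = 2 * L := ⟨(b' - c)/2, by omega⟩
      obtain ⟨S, hS⟩ : ∃ S, b' + c = 2 * S := ⟨(b' + c)/2, by omega⟩
      have e1 : b' = L + S := by omega
      have e2 : c = S - L := by omega
      subst e1 e2
      refine ⟨⟨L, S + a, S - a⟩, ?_, ?_⟩
      · simp only [Set.mem_setOf_eq]
        push_cast
        have key : 4 * (N : ℤ) = 8 * pent L + 2 * oct (S + a) + 2 * oct (S - a) := by
          linear_combination 4 * hy + 6 * tri_cast b - 6 * hb3 + 2 * pent_two (S - L)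
            - 4 * pent_two L - 2 * oct_def (S + a) - 2 * oct_def (S - a)
        linarith
      · simp only []
        refine Prod.ext ?_ (Prod.ext ?_ ?_)
        · simp only []; omega
        · simp only []
          rw [show L + (S + a + (S - a))/2 = L + S from by omega]
          exact hb1
        · simp only []; omega
  · -- Part 2
    have g1 : {x : ℤ × ℤ × ℤ | (4 * (N:ℤ) + 1 : ℤ) = (4:ℕ) * pent x.1 + (1:ℕ) * oct x.2.1 + (1:ℕ) * oct x.2.2}
        = {x : ℤ × ℤ × ℤ | 4 * (N:ℤ) + 1 = 4 * pent x.1 + oct x.2.1 + oct x.2.2} := by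
      ext x; simp only [Set.mem_setOf_eq]; push_cast
      constructor <;> intro h <;> linarith
    have g2 : {x : ℤ × ℕ × ℤ | (N:ℤ) = (3:ℕ) * x.1 ^ 2 + (3:ℕ) * (tri x.2.1 : ℤ) + (2:ℕ) * pent x.2.2}
        = {x : ℤ × ℕ × ℤ | (N:ℤ) = 3 * x.1 ^ 2 + 3 * (tri x.2.1 : ℤ) + 2 * pent x.2.2} := by
      ext x; simp only [Set.mem_setOf_eq]; push_cast
      constructor <;> intro h <;> linarith
    have g3 : {x : ℕ × ℕ × ℤ | ((N:ℤ) - 1 : ℤ) = (3:ℕ) * (tri x.1 : ℤ) + (6:ℕ) * (tri x.2.1 : ℤ) + (1:ℕ) * oct x.2.2}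
        = {x : ℕ × ℕ × ℤ | (N:ℤ) - 1 = 3 * (tri x.1 : ℤ) + 6 * (tri x.2.1 : ℤ) + oct x.2.2} := by
      ext x; simp only [Set.mem_setOf_eq]; push_cast
      constructor <;> intro h <;> linarith
    unfold pGCount rtpCount TgCount
    rw [g1, g2, g3]
    exact part2aux N
  · -- Part 3
    have hset : {x : ℤ × ℤ × ℤ | (4 * (N:ℤ) + 3 : ℤ) = (4:ℕ) * pent x.1 + (1:ℕ) * oct x.2.1 + (1:ℕ) * oct x.2.2} = ∅ := by
      ext ⟨l, m, n⟩
      simp only [Set.mem_setOf_eq, Set.mem_empty_iff_false, iff_false]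
      intro h
      push_cast at h
      obtain ⟨K1, hK1⟩ := oct_dec m
      obtain ⟨K2, hK2⟩ := oct_dec n
      obtain ⟨P, hP⟩ : ∃ P, pent l = P := ⟨_, rfl⟩
      rw [hP, hK1, hK2] at h
      omega
    unfold pGCount
    rw [hset, Set.ncard_empty]
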